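/- arXiv:1604.07075 — 4 statements merged into one kernel-verified Lean document; each statement's English description precedes it below -/
import Mathlib

section
/- Let R be an ordered commutative ring and (G,L) an R-network on a connected ∂-graph G with w(e) > 0 for all edges e and d(x) ≥ 0 for all vertices x. Suppose ∂V is nonempty. If u : V → R is a finitely supported harmonic function (Lu(x) = 0 for x ∈ V°) with u|_{∂V} = 0, then u = 0. -/
open Finsupp

/-- A graph with boundary (`∂`-graph) together with a generalized Laplacian datum over `R`:
oriented edges with a fixed-point-free reversal involution, local finiteness,
a set of boundary vertices, symmetric edge weights `w` and diagonal perturbation `d`. -/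
structure DNetwork (R : Type) [CommRing R] where
  V : Type
  E : Type
  src : E → V
  rev : E → E
  rev_rev : ∀ e, rev (rev e) = e
  rev_ne : ∀ e, rev e ≠ e
  finE : ∀ x : V, Fintype {e : E // src e = x}
  boundary : Set V
  w : E → R
  w_rev : ∀ e, w (rev e) = w e
  d : V → R

namespace DNetwork

variable {R : Type} [CommRing R] (N : DNetwork R)

/-- The endpoint of an oriented edge. -/
def tgt (e : N.E) : N.V := N.src (N.rev e)

/-- The generalized Laplacian evaluated at the vertex `x`, as a linear functional on
`M`-valued functions: `Lu(x) = d(x) u(x) + ∑_{e : e₊ = x} w(e) (u(x) - u(e₋))`. -/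
noncomputable def lapAt {M : Type} [AddCommGroup M] [Module R M] (x : N.V) :
    (N.V → M) →ₗ[R] M :=
  letI := N.finE x
  N.d x • (LinearMap.proj x : (N.V → M) →ₗ[R] M) +
    ∑ e : {e : N.E // N.src e = x},
      N.w e.1 • ((LinearMap.proj x : (N.V → M) →ₗ[R] M) - LinearMap.proj (N.tgt e.1))

/-- The generalized Laplacian applied to the basis chain at the vertex `x`. -/
noncomputable def lapSingle (x : N.V) : N.V →₀ R :=
  letI := N.finE x
  N.d x • Finsupp.single x 1 +
    ∑ e : {e : N.E // N.src e = x},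
      N.w e.1 • (Finsupp.single x 1 - Finsupp.single (N.tgt e.1) 1)

/-- The generalized Laplacian as a linear endomorphism of the module `RV` of `0`-chains. -/
noncomputable def chainLap : (N.V →₀ R) →ₗ[R] (N.V →₀ R) :=
  Finsupp.lsum R fun x => LinearMap.toSpanSingleton R _ (N.lapSingle x)

/-- The set of interior vertices. -/
def interior : Set N.V := N.boundaryᶜ

/-- The submodule `L(RV°)` of `RV`. -/
noncomputable def lapImage : Submodule R (N.V →₀ R) :=
  Submodule.map N.chainLap (Finsupp.supported R R N.interior)

/-- The fundamental module `Υ(G,L) = RV / L(RV°)`. -/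
abbrev Upsilon := (N.V →₀ R) ⧸ N.lapImage

/-- The submodule of `M`-valued harmonic functions `U(G,L,M)`. -/
noncomputable def harmonic (M : Type) [AddCommGroup M] [Module R M] :
    Submodule R (N.V → M) :=
  ⨅ x ∈ N.interior, LinearMap.ker (N.lapAt (M := M) x)

/-- The module `U₀(G,L,M)` of finitely supported `M`-valued functions `u` with
`u = 0` on the boundary and `Lu ≡ 0` everywhere. -/
noncomputable def U0 (M : Type) [AddCommGroup M] [Module R M] :
    Submodule R (N.V →₀ M) :=
  (⨅ x ∈ N.boundary, LinearMap.ker (Finsupp.lapply (M := M) (R := R) x)) ⊓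
    (⨅ x : N.V, LinearMap.ker ((N.lapAt (M := M) x).comp Finsupp.lcoeFun))

/-- Adjacency via an oriented edge. -/
def Adj (x y : N.V) : Prop := ∃ e : N.E, N.src e = x ∧ N.tgt e = y

/-- Connectivity of the underlying graph. -/
def Connected : Prop := ∀ x y : N.V, Relation.ReflTransGen N.Adj x y

end DNetwork

/-! Maximum principle. If `u` took a positive value, being finitely supported it would attain a
positive maximum `M`. At a vertex where `u = M` every summand of `Lu = d u + ∑ w (u(x) - u(y))`
is nonnegative, so harmonicity forces `u = M` at all neighbours; by connectivity `u ≡ M`,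
contradicting `u = 0` on the nonempty boundary. The same applied to `-u` gives `u = 0`. -/

theorem Finsupp.exists_forall_le_of_pos {α M : Type*} [Zero M] [LinearOrder M] {u : α →₀ M}
    {x₀ : α} (hx₀ : 0 < u x₀) : ∃ x, ∀ y, u y ≤ u x := by
  obtain ⟨x, -, hx⟩ := u.support.exists_max_image u ⟨x₀, mem_support_iff.2 hx₀.ne'⟩
  refine ⟨x, fun y => ?_⟩
  by_cases hy : y ∈ u.support
  · exact hx y hy
  · rw [notMem_support_iff.1 hy]
    exact hx₀.le.trans (hx x₀ (mem_support_iff.2 hx₀.ne'))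

namespace DNetwork

variable {R : Type} [CommRing R] (N : DNetwork R)

theorem lapAt_apply {M : Type} [AddCommGroup M] [Module R M] (x : N.V) (u : N.V → M) :
    N.lapAt x u = letI := N.finE x
      N.d x • u x + ∑ e : {e : N.E // N.src e = x}, N.w e.1 • (u x - u (N.tgt e.1)) := by
  simp [lapAt, LinearMap.sum_apply]

theorem Connected.forall_of_adj_closed (hconn : N.Connected) {P : N.V → Prop}
    (hP : ∀ x y, P x → N.Adj x y → P y) {x : N.V} (hx : P x) (y : N.V) : P y := by
  induction hconn x y with
  | refl => exact hx
  | tail _ hadj ih => exact hP _ _ ih hadj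

section Ordered

variable [LinearOrder R] [IsStrictOrderedRing R] {N}

theorem apply_tgt_eq_of_lapAt_eq_zero_of_isMax (hw : ∀ e : N.E, 0 < N.w e)
    {x : N.V} (hdx : 0 ≤ N.d x) {u : N.V → R} (hLu : N.lapAt x u = 0) (hux : 0 ≤ u x)
    (hmax : ∀ y, u y ≤ u x) {e : N.E} (he : N.src e = x) : u (N.tgt e) = u x := by
  let := N.finE x
  have hterm : ∀ e' : {e' : N.E // N.src e' = x}, 0 ≤ N.w e'.1 * (u x - u (N.tgt e'.1)) :=
    fun e' => mul_nonneg (hw e'.1).le (sub_nonneg.2 (hmax _))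
  have hsum : N.d x * u x +
      ∑ e' : {e' : N.E // N.src e' = x}, N.w e'.1 * (u x - u (N.tgt e'.1)) = 0 := by
    simpa [lapAt_apply] using hLu
  have hsum0 := ((add_eq_zero_iff_of_nonneg (mul_nonneg hdx hux)
    (Finset.sum_nonneg fun e' _ => hterm e')).1 hsum).2
  have hwe : N.w e * (u x - u (N.tgt e)) = 0 :=
    (Finset.sum_eq_zero_iff_of_nonneg fun e' _ => hterm e').1 hsum0 ⟨e, he⟩ (Finset.mem_univ _)
  linarith [(mul_eq_zero.1 hwe).resolve_left (hw e).ne']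

theorem apply_nonpos_of_lapAt_eq_zero (hw : ∀ e : N.E, 0 < N.w e) (hd : ∀ x : N.V, 0 ≤ N.d x)
    (hconn : N.Connected) (hb : N.boundary.Nonempty) {u : N.V →₀ R}
    (hbd : ∀ x ∈ N.boundary, u x = 0) (hharm : ∀ x ∈ N.interior, N.lapAt x ⇑u = 0)
    (x : N.V) : u x ≤ 0 := by
  by_contra! hx
  obtain ⟨xm, hxm⟩ := Finsupp.exists_forall_le_of_pos hx
  have hpos : 0 < u xm := hx.trans_le (hxm x)
  have hspread : ∀ y z, u y = u xm → N.Adj y z → u z = u xm := by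
    rintro y z hy ⟨e, rfl, rfl⟩
    have hint : N.src e ∈ N.interior := fun hbdy => hpos.ne' (hy ▸ hbd _ hbdy)
    rw [← hy]
    exact apply_tgt_eq_of_lapAt_eq_zero_of_isMax hw (hd _) (hharm _ hint)
      (hy ▸ hpos.le) (fun z => hy ▸ hxm z) rfl
  obtain ⟨b, hbB⟩ := hb
  exact hpos.ne ((hbd b hbB).symm.trans (hconn.forall_of_adj_closed N hspread rfl b))

end Ordered

end DNetwork

/-- over an ordered commutative ring, with positive edge weights, nonnegative
diagonal, connected graph and nonempty boundary, a finitely supported harmonic function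
vanishing on the boundary vanishes identically. -/
theorem finsupp_harmonic_vanishing_boundary_eq_zero
    {R : Type} [CommRing R] [LinearOrder R] [IsStrictOrderedRing R] (N : DNetwork R)
    (hw : ∀ e : N.E, 0 < N.w e) (hd : ∀ x : N.V, 0 ≤ N.d x)
    (hconn : N.Connected) (hb : N.boundary.Nonempty)
    (u : N.V →₀ R)
    (hbd : ∀ x ∈ N.boundary, u x = 0)
    (hharm : ∀ x ∈ N.interior, N.lapAt x ⇑u = 0) :
    u = 0 := by
  have hneg_bd : ∀ x ∈ N.boundary, (-u) x = 0 := fun x hx => by simp [hbd x hx]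
  have hneg_harm : ∀ x ∈ N.interior, N.lapAt x ⇑(-u) = 0 := fun x hx => by
    rw [coe_neg, map_neg, hharm x hx, neg_zero]
  ext x
  refine le_antisymm (DNetwork.apply_nonpos_of_lapAt_eq_zero hw hd hconn hb hbd hharm x) ?_
  simpa using DNetwork.apply_nonpos_of_lapAt_eq_zero hw hd hconn hb hneg_bd hneg_harm x
end

section
/- Let R be a principal ideal domain with field of fractions F, and (G,L) a finite non-degenerate R-network. Then the torsion submodule of Υ(G,L) is isomorphic to U₀(G,L, F/R) = Tor₁^R(Υ(G,L), F/R), and hence Υ(G,L) ≅ R^{|∂V|} ⊕ U₀(G,L, F/R). -/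
open Finsupp

/-!
Since `L : R^{V°} → R^V` is injective, so is its extension `L_F` to the fraction field `F` (clear
denominators). The snake lemma for `L` and `0 → R → F → F/R → 0` then identifies `U₀(G,L,F/R)`,
the kernel of `L` on `(F/R)^{V°}`, with the kernel of `Υ → F^V / L_F(F^{V°})`, which is the
torsion of `Υ`. Concretely, both are the quotient of the module of pairs `(u, v)` with
`u ∈ F^{V°}` and `L u = v` integral by the pairs `(w, L w)` with `w ∈ R^{V°}`.
Over a PID, `Υ / torsion` is free, of rank `|V| - |V°| = |∂V|`, and the projection splits.
-/

abbrev FractionRingQuot (R : Type) [CommRing R] : Type :=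
  FractionRing R ⧸ LinearMap.range (Algebra.linearMap R (FractionRing R))

namespace FractionRing

variable {R ι : Type} [CommRing R]

lemma linearMap_injective : Function.Injective (Algebra.linearMap R (FractionRing R)) :=
  IsFractionRing.injective R _

lemma exists_smul_eq_comp_linearMap [Finite ι] (u : ι → FractionRing R) :
    ∃ r ∈ nonZeroDivisors R, ∃ w : ι → R, Algebra.linearMap R _ ∘ w = r • u := by
  obtain ⟨r, hr⟩ := IsLocalization.exist_integer_multiples_of_finite (nonZeroDivisors R) u
  choose w hw using hr
  exact ⟨r, r.2, w, funext hw⟩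

lemma mkQ_comp_eq_zero_iff (u : ι → FractionRing R) :
    (LinearMap.range (Algebra.linearMap R (FractionRing R))).mkQ ∘ u = 0 ↔
      ∃ w : ι → R, Algebra.linearMap R _ ∘ w = u := by
  simp only [funext_iff, Function.comp_apply, Pi.zero_apply, Submodule.mkQ_apply,
    Submodule.Quotient.mk_eq_zero, LinearMap.mem_range]
  exact ⟨fun h => ⟨fun i => (h i).choose, fun i => (h i).choose_spec⟩,
    fun ⟨w, hw⟩ i => ⟨w i, hw i⟩⟩

lemma smul_eq_zero_iff_of_mem_nonZeroDivisors {r : R} (hr : r ∈ nonZeroDivisors R)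
    {u : ι → FractionRing R} : r • u = 0 ↔ u = 0 := by
  have hunit := IsLocalization.map_units (FractionRing R) ⟨r, hr⟩
  simp [funext_iff, Algebra.smul_def, hunit.mul_right_eq_zero]

end FractionRing

theorem Module.nonempty_linearEquiv_pi_prod_torsion {R M : Type*} [CommRing R] [IsDomain R]
    [IsPrincipalIdealRing R] [AddCommGroup M] [Module R M] [Module.Finite R M] :
    Nonempty (M ≃ₗ[R] (Fin (Module.finrank R M) → R) × Submodule.torsion R M) := by
  let T := Submodule.torsion R M
  have : Module.Free R (M ⧸ T) := Module.free_of_finite_type_torsion_free'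
  obtain ⟨s, hs⟩ := Module.projective_lifting_property T.mkQ LinearMap.id T.mkQ_surjective
  have hT : LinearMap.range T.subtype = LinearMap.ker T.mkQ := by
    rw [Submodule.range_subtype, Submodule.ker_mkQ]
  let b := Module.finBasisOfFinrankEq R (M ⧸ T) (finrank_quotient_eq_of_le_torsion le_rfl)
  exact ⟨(lequivProdOfRightSplitExact T.injective_subtype hT hs).symm ≪≫ₗ
    LinearEquiv.prodComm R _ _ ≪≫ₗ b.equivFun.prodCongr (LinearEquiv.refl R T)⟩

namespace DNetwork

variable {R : Type} [CommRing R] (N : DNetwork R)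

lemma tgt_rev (e : N.E) : N.tgt (N.rev e) = N.src e := by
  simp [tgt, N.rev_rev]

open scoped Classical in
lemma lapSingle_apply_of_ne {x y : N.V} (hxy : x ≠ y) :
    N.lapSingle x y = -letI := N.finE x
      ∑ e ∈ Finset.univ.filter fun e : {e // N.src e = x} => N.tgt e.1 = y, N.w e.1 := by
  simp only [lapSingle, Finsupp.add_apply, Finsupp.smul_apply, Finsupp.finsetSum_apply,
    Finsupp.sub_apply, Finsupp.single_apply, if_neg hxy, smul_eq_mul, mul_zero, zero_add,
    zero_sub, mul_neg, Finset.sum_neg_distrib, Finset.sum_filter]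
  congr 1
  refine Finset.sum_congr rfl fun e _ => ?_
  split_ifs <;> simp_all

lemma lapSingle_symm (x y : N.V) : N.lapSingle x y = N.lapSingle y x := by
  classical
  rcases eq_or_ne x y with rfl | hxy
  · rfl
  rw [N.lapSingle_apply_of_ne hxy, N.lapSingle_apply_of_ne hxy.symm, neg_inj]
  -- reversing the orientation matches the edges from `x` to `y` with those from `y` to `x`
  refine Finset.sum_bij' (fun e he => ⟨N.rev e.1, (Finset.mem_filter.mp he).2⟩)
    (fun e he => ⟨N.rev e.1, (Finset.mem_filter.mp he).2⟩) ?_ ?_ ?_ ?_ ?_ <;> intro e he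
  all_goals simp_all [N.tgt_rev, N.rev_rev, N.w_rev, e.2]

section Laplacian

variable {M M' : Type} [AddCommGroup M] [Module R M] [AddCommGroup M'] [Module R M']

variable (M) in
noncomputable def lap : (N.V → M) →ₗ[R] N.V → M := LinearMap.pi N.lapAt

lemma lap_apply (u : N.V → M) (x : N.V) : N.lap M u x = N.lapAt x u := rfl

lemma lapAt_comp (g : M →ₗ[R] M') (x : N.V) (u : N.V → M) :
    N.lapAt x (g ∘ u) = g (N.lapAt x u) := by
  simp [lapAt, map_sum]

lemma lap_comp (g : M →ₗ[R] M') (u : N.V → M) : N.lap M' (g ∘ u) = g ∘ N.lap M u :=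
  funext fun x => N.lapAt_comp g x u

lemma lapAt_eq_sum [Fintype N.V] (x : N.V) (u : N.V → M) :
    N.lapAt x u = ∑ y, N.lapSingle x y • u y := by
  rw [← Fintype.linearCombination_apply,
    ← Finsupp.linearCombination_eq_fintype_linearCombination_apply]
  let := N.finE x
  simp [lapAt, lapSingle]

lemma coe_chainLap [Fintype N.V] (f : N.V →₀ R) : ⇑(N.chainLap f) = N.lap R f := by
  ext y
  rw [lap_apply, lapAt_eq_sum, chainLap, Finsupp.lsum_apply, Finsupp.sum_apply,
    Finsupp.sum_fintype _ _ (by simp)]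
  simp [N.lapSingle_symm y, mul_comm]

lemma mem_U0_iff (u : N.V →₀ M) :
    u ∈ N.U0 M ↔ (∀ x ∈ N.boundary, u x = 0) ∧ N.lap M u = 0 := by
  simp [U0, funext_iff, lap_apply]

end Laplacian

section Finite

variable [Fintype N.V]

lemma mem_lapImage_iff (v : N.V →₀ R) :
    v ∈ N.lapImage ↔ ∃ w : N.V → R, (∀ x ∈ N.boundary, w x = 0) ∧ N.lap R w = v := by
  simp only [lapImage, Submodule.mem_map, Finsupp.mem_supported', interior, Set.mem_compl_iff,
    not_not, ← DFunLike.coe_fn_eq, coe_chainLap]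
  exact ⟨fun ⟨f, hf, hv⟩ => ⟨f, hf, hv⟩,
    fun ⟨w, hw, hv⟩ => ⟨Finsupp.equivFunOnFinite.symm w, by simpa using hw, by simpa using hv⟩⟩

lemma eq_zero_of_lap_eq_zero (hnd : N.U0 R = ⊥) {w : N.V → R}
    (hb : ∀ x ∈ N.boundary, w x = 0) (hl : N.lap R w = 0) : w = 0 := by
  have hw : Finsupp.equivFunOnFinite.symm w ∈ N.U0 R := by
    rw [mem_U0_iff]
    simpa using ⟨hb, hl⟩
  rw [hnd, Submodule.mem_bot] at hw
  simpa using congrArg (⇑) hw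

lemma eq_zero_of_lap_fractionRing_eq_zero (hnd : N.U0 R = ⊥) {u : N.V → FractionRing R}
    (hb : ∀ x ∈ N.boundary, u x = 0) (hl : N.lap _ u = 0) : u = 0 := by
  obtain ⟨r, hr, w, hw⟩ := FractionRing.exists_smul_eq_comp_linearMap u
  have hι := FractionRing.linearMap_injective (R := R)
  suffices w = 0 by
    rw [← FractionRing.smul_eq_zero_iff_of_mem_nonZeroDivisors hr, ← hw, this]
    ext; simp
  refine N.eq_zero_of_lap_eq_zero hnd (fun x hx => hι ?_) (hι.comp_left ?_)
  · simpa [hb x hx] using congrFun hw x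
  · beta_reduce
    rw [← N.lap_comp, hw, map_smul, hl, smul_zero]
    ext; simp

end Finite

/-- The pullback in the snake lemma for `L` and `0 → R → F → F/R → 0`. -/
def integralLapPairs : Submodule R ((N.V → FractionRing R) × (N.V → R)) where
  carrier := {p | (∀ x ∈ N.boundary, p.1 x = 0) ∧
    N.lap _ p.1 = Algebra.linearMap R (FractionRing R) ∘ p.2}
  add_mem' := by
    rintro p q ⟨hp, hlp⟩ ⟨hq, hlq⟩
    refine ⟨fun x hx => by simp [hp x hx, hq x hx], ?_⟩
    ext x; simp [map_add, hlp, hlq]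
  zero_mem' := ⟨fun _ _ => rfl, by ext; simp⟩
  smul_mem' := by
    rintro r p ⟨hp, hlp⟩
    refine ⟨fun x hx => by simp [hp x hx], ?_⟩
    change N.lap _ (r • p.1) = _ ∘ (r • p.2)
    rw [map_smul, hlp]
    ext x; simp [Algebra.smul_def]

namespace integralLapPairs

variable [Fintype N.V]

noncomputable def toUpsilon : N.integralLapPairs →ₗ[R] N.Upsilon :=
  N.lapImage.mkQ ∘ₗ (Finsupp.linearEquivFunOnFinite R R N.V).symm.toLinearMap ∘ₗ
    LinearMap.snd R _ _ ∘ₗ N.integralLapPairs.subtype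

noncomputable def toU0 : N.integralLapPairs →ₗ[R] N.U0 (FractionRingQuot R) :=
  LinearMap.codRestrict _ ((Finsupp.linearEquivFunOnFinite R _ N.V).symm.toLinearMap ∘ₗ
      (LinearMap.range (Algebra.linearMap R (FractionRing R))).mkQ.compLeft N.V ∘ₗ
      LinearMap.fst R _ _ ∘ₗ N.integralLapPairs.subtype) fun ⟨p, hb, hl⟩ => by
    refine (mem_U0_iff _ _).mpr ⟨fun x hx => by simp [hb x hx], ?_⟩
    change N.lap _ ((LinearMap.range (Algebra.linearMap R (FractionRing R))).mkQ ∘ p.1) = 0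
    rw [N.lap_comp, hl, (FractionRing.mkQ_comp_eq_zero_iff _).mpr ⟨_, rfl⟩]

variable {N}

lemma toUpsilon_eq_zero_iff (p : N.integralLapPairs) :
    toUpsilon N p = 0 ↔ ∃ w : N.V → R, (∀ x ∈ N.boundary, w x = 0) ∧ N.lap R w = p.1.2 := by
  simp [toUpsilon, Submodule.Quotient.mk_eq_zero, mem_lapImage_iff]

lemma coe_toU0 (p : N.integralLapPairs) :
    ⇑(toU0 N p : N.V →₀ FractionRingQuot R) =
      (LinearMap.range (Algebra.linearMap R (FractionRing R))).mkQ ∘ p.1.1 :=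
  rfl

lemma toU0_eq_zero_iff (p : N.integralLapPairs) :
    toU0 N p = 0 ↔ ∃ w : N.V → R, Algebra.linearMap R _ ∘ w = p.1.1 := by
  rw [← FractionRing.mkQ_comp_eq_zero_iff, ← coe_toU0, Subtype.ext_iff, ← DFunLike.coe_fn_eq]
  rfl

variable (N)

lemma ker_toUpsilon_eq_ker_toU0 (hnd : N.U0 R = ⊥) :
    LinearMap.ker (toUpsilon N) = LinearMap.ker (toU0 N) := by
  have hι := FractionRing.linearMap_injective (R := R)
  ext p
  obtain ⟨⟨u, v⟩, hb, hl⟩ := p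
  rw [LinearMap.mem_ker, LinearMap.mem_ker, toUpsilon_eq_zero_iff, toU0_eq_zero_iff]
  dsimp only at hb hl ⊢
  constructor
  · rintro ⟨w, hwb, hwl⟩
    refine ⟨w, (sub_eq_zero.mp (N.eq_zero_of_lap_fractionRing_eq_zero hnd ?_ ?_)).symm⟩
    · intro x hx
      simp [hb x hx, hwb x hx]
    · rw [map_sub, hl, N.lap_comp, hwl, sub_self]
  · rintro ⟨w, rfl⟩
    refine ⟨w, fun x hx => hι (by simpa using hb x hx), hι.comp_left ?_⟩
    simpa [← N.lap_comp] using hl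

lemma range_toUpsilon : LinearMap.range (toUpsilon N) = Submodule.torsion R N.Upsilon := by
  have hι := FractionRing.linearMap_injective (R := R)
  ext t
  constructor
  · rintro ⟨p, rfl⟩
    obtain ⟨hb, hl⟩ := p.2
    obtain ⟨r, hr, w, hw⟩ := FractionRing.exists_smul_eq_comp_linearMap p.1.1
    refine ⟨⟨r, hr⟩, ?_⟩
    rw [Submonoid.mk_smul, ← map_smul, toUpsilon_eq_zero_iff]
    refine ⟨w, fun x hx => hι ?_, hι.comp_left ?_⟩
    · simpa [hb x hx] using congrFun hw x
    · beta_reduce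
      rw [← N.lap_comp, hw, map_smul, hl]
      ext; simp [Algebra.smul_def]
  · rintro ⟨⟨r, hr⟩, hrt⟩
    obtain ⟨f, rfl⟩ := Submodule.mkQ_surjective _ t
    rw [Submonoid.mk_smul, ← map_smul, Submodule.mkQ_apply, Submodule.Quotient.mk_eq_zero,
      mem_lapImage_iff] at hrt
    obtain ⟨w, hwb, hwl⟩ := hrt
    let c : FractionRing R := ↑(IsLocalization.map_units (FractionRing R) ⟨r, hr⟩).unit⁻¹
    have hc : c * algebraMap R _ r = 1 := IsUnit.val_inv_mul _
    let u := LinearMap.mulLeft R c ∘ Algebra.linearMap R (FractionRing R) ∘ w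
    have hu : (u, ⇑f) ∈ N.integralLapPairs := by
      refine ⟨fun x hx => by simp [u, hwb x hx], ?_⟩
      dsimp only [u]
      rw [N.lap_comp, N.lap_comp, hwl]
      ext x
      simp [← mul_assoc, hc]
    exact ⟨⟨_, hu⟩, by simp [toUpsilon]⟩

lemma toU0_surjective : Function.Surjective (toU0 N) := by
  rintro ⟨ū, hū⟩
  obtain ⟨hūb, hūl⟩ := (mem_U0_iff _ _).mp hū
  obtain ⟨s, hs⟩ := (Submodule.mkQ_surjective
    (LinearMap.range (Algebra.linearMap R (FractionRing R)))).hasRightInverse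
  let u := N.interior.indicator (s ∘ ū)
  have hmk : (LinearMap.range (Algebra.linearMap R (FractionRing R))).mkQ ∘ u = ū := by
    ext x
    by_cases hx : x ∈ N.boundary
    · simp [u, interior, hx, hūb x hx]
    · simp [u, interior, hx, hs (ū x)]
  obtain ⟨v, hv⟩ := (FractionRing.mkQ_comp_eq_zero_iff (N.lap _ u)).mp
    (by rw [← N.lap_comp, hmk, hūl])
  refine ⟨⟨(u, v), fun x hx => by simp [u, interior, hx], hv.symm⟩, ?_⟩
  ext1
  exact DFunLike.coe_injective hmk

end integralLapPairs

open integralLapPairs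

variable [Fintype N.V]

noncomputable def torsionEquivU0 (hnd : N.U0 R = ⊥) :
    Submodule.torsion R N.Upsilon ≃ₗ[R] N.U0 (FractionRingQuot R) :=
  (LinearEquiv.ofEq _ _ (range_toUpsilon N)).symm ≪≫ₗ
    (LinearMap.quotKerEquivRange (toUpsilon N)).symm ≪≫ₗ
    Submodule.quotEquivOfEq _ _ (ker_toUpsilon_eq_ker_toU0 N hnd) ≪≫ₗ
    LinearMap.quotKerEquivOfSurjective (toU0 N) (toU0_surjective N)

lemma injective_chainLap_domRestrict (hnd : N.U0 R = ⊥) :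
    Function.Injective (N.chainLap.domRestrict (Finsupp.supported R R N.interior)) := by
  refine (injective_iff_map_eq_zero _).mpr ?_
  rintro ⟨f, hf⟩ hLf
  have hfb : ∀ x ∈ N.boundary, f x = 0 := fun x hx =>
    (Finsupp.mem_supported' _ _).mp hf x (by simpa [interior] using hx)
  have hLf' : N.lap R f = 0 := by
    rw [← coe_chainLap]
    exact congrArg DFunLike.coe hLf
  ext1
  exact DFunLike.coe_injective (N.eq_zero_of_lap_eq_zero hnd hfb hLf')

lemma finrank_lapImage [StrongRankCondition R] (hnd : N.U0 R = ⊥) :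
    Module.finrank R N.lapImage = Nat.card N.interior := by
  rw [lapImage, ← LinearMap.range_domRestrict,
    ← (LinearEquiv.ofInjective _ (N.injective_chainLap_domRestrict hnd)).finrank_eq,
    (Finsupp.supportedEquivFinsupp N.interior).finrank_eq]
  classical
  rw [Module.finrank_finsupp_self, Nat.card_eq_fintype_card]

lemma finrank_upsilon [IsDomain R] (hnd : N.U0 R = ⊥) :
    Module.finrank R N.Upsilon = Nat.card N.boundary := by
  have hV := N.lapImage.finrank_quotient_add_finrank
  rw [N.finrank_lapImage hnd, Module.finrank_finsupp_self, ← Nat.card_eq_fintype_card,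
    ← Set.ncard_add_ncard_compl N.boundary] at hV
  simpa [interior] using hV

end DNetwork

/-- over a PID `R` with fraction field `F`, for a finite non-degenerate network,
the torsion submodule of `Υ(G,L)` is isomorphic to `U₀(G,L,F/R)`, and hence
`Υ(G,L) ≅ R^{|∂V|} ⊕ U₀(G,L,F/R)`. -/
theorem upsilon_torsion_iso_u0_fraction_quotient
    {R : Type} [CommRing R] [IsDomain R] [IsPrincipalIdealRing R]
    (N : DNetwork R) [Fintype N.V]
    (hnd : N.U0 R = ⊥) :
    Nonempty (↥(Submodule.torsion R N.Upsilon) ≃ₗ[R]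
        ↥(N.U0 (FractionRing R ⧸ LinearMap.range (Algebra.linearMap R (FractionRing R))))) ∧
      Nonempty (N.Upsilon ≃ₗ[R]
        ((Fin (Nat.card N.boundary) → R) ×
          ↥(N.U0 (FractionRing R ⧸ LinearMap.range (Algebra.linearMap R (FractionRing R)))))) := by
  refine ⟨⟨N.torsionEquivU0 hnd⟩, ?_⟩
  have : Module.Finite R N.Upsilon := Module.Finite.of_surjective _ N.lapImage.mkQ_surjective
  obtain ⟨e⟩ := Module.nonempty_linearEquiv_pi_prod_torsion (R := R) (M := N.Upsilon)
  rw [N.finrank_upsilon hnd] at e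
  exact ⟨e ≪≫ₗ (LinearEquiv.refl R _).prodCongr (N.torsionEquivU0 hnd)⟩
end

section
/- Let K_{m,n} be the complete bipartite ∂-graph whose partite sets are m boundary vertices and n interior vertices, with the standard Laplacian L_std (all edge weights 1, d = 0) over ℤ. Then Υ_ℤ(K_{m,n}, L_std) ≅ ℤ^m ⊕ (ℤ/m)^{n−1}. -/
open Finsupp

/-- The complete boundary-interior bipartite `∂`-graph `K_{m,n}` with `m` boundary vertices,
`n` interior vertices, every boundary vertex joined to every interior vertex by a single edge,
all edge weights `1` and `d = 0` (the standard Laplacian) over `ℤ`. -/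
noncomputable def bipNet (m n : ℕ) : DNetwork ℤ where
  V := Fin m ⊕ Fin n
  E := (Fin m × Fin n) ⊕ (Fin n × Fin m)
  src := fun e => match e with
    | .inl p => .inl p.1
    | .inr p => .inr p.1
  rev := fun e => match e with
    | .inl p => .inr (p.2, p.1)
    | .inr p => .inl (p.2, p.1)
  rev_rev := by rintro (⟨i, j⟩ | ⟨j, i⟩) <;> rfl
  rev_ne := by rintro (⟨i, j⟩ | ⟨j, i⟩) <;> simp
  finE := fun _ => Fintype.ofFinite _
  boundary := Set.range Sum.inl
  w := fun _ => 1
  w_rev := fun _ => rfl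
  d := fun _ => 0

/-!
Write `bᵢ` for the boundary and `rⱼ` for the interior basis chains of `ℤV`. The Laplacian of
`rⱼ` is `gⱼ = m rⱼ - ∑ᵢ bᵢ`, and `gⱼ - g₀ = m (rⱼ - r₀)`. Since `b₀` has coefficient `-1` in
`g₀`, the chains `g₀, b₁, …, b_{m-1}, r₀` and `rⱼ - r₀` (`j ≠ 0`) form a basis of `ℤV`, in which
`L(ℤV°)` is spanned by `g₀` and the `m (rⱼ - r₀)`. Hence `Υ ≅ ℤ^m ⊕ (ℤ/m)^{n-1}`, with free
generators `r₀, b₁, …, b_{m-1}` and torsion generators `rⱼ - r₀`. That the kernel of the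
coordinate map is no larger than `L(ℤV°)` follows from the map back from the coordinates, which
is well defined on the torsion part because `m (rⱼ - r₀)` is a relation.
-/

namespace DNetwork

variable {R : Type} [CommRing R] (N : DNetwork R)

theorem chainLap_single (x : N.V) : N.chainLap (single x 1) = N.lapSingle x := by
  simp [chainLap]

theorem lapImage_eq_span : N.lapImage = Submodule.span R (N.lapSingle '' N.interior) := by
  rw [lapImage, supported_eq_span_single, Submodule.map_span, Set.image_image]
  simp only [chainLap_single]

end DNetwork

theorem LinearMap.ker_eq_of_comp_eq_mkQ {R M P : Type*} [Ring R] [AddCommGroup M] [Module R M]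
    [AddCommGroup P] [Module R P] {S : Submodule R M} {f : M →ₗ[R] P} {g : P →ₗ[R] M ⧸ S}
    (hS : S ≤ ker f) (hgf : g ∘ₗ f = S.mkQ) : ker f = S := by
  refine le_antisymm (fun x hx => ?_) hS
  rw [← Submodule.Quotient.mk_eq_zero, ← Submodule.mkQ_apply, ← hgf, comp_apply, mem_ker.1 hx,
    map_zero]

namespace bipNet

variable (m n : ℕ)

-- Chains are taken over `Fin m ⊕ Fin n`: `simp` and `rw` do not see through `(bipNet m n).V`.
noncomputable def lapInterior (j : Fin n) : Fin m ⊕ Fin n →₀ ℤ :=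
  (m : ℤ) • single (.inr j) 1 - ∑ i, single (.inl i) 1

noncomputable def relations : Submodule ℤ (Fin m ⊕ Fin n →₀ ℤ) :=
  Submodule.span ℤ (Set.range (lapInterior m n))

theorem lapInterior_mem_relations (j : Fin n) : lapInterior m n j ∈ relations m n :=
  Submodule.subset_span (Set.mem_range_self j)

theorem lapSingle_inr (j : Fin n) : (bipNet m n).lapSingle (.inr j) = lapInterior m n j := by
  let := (bipNet m n).finE (.inr j)
  have hedges : Function.Bijective fun i : Fin m =>
      (⟨.inr (j, i), rfl⟩ : {e : (bipNet m n).E // (bipNet m n).src e = .inr j}) := by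
    refine ⟨fun a b h => (Prod.ext_iff.1 (Sum.inr_injective (congrArg Subtype.val h))).2, ?_⟩
    rintro ⟨⟨i, j'⟩ | ⟨j', i⟩, h⟩
    · cases h
    · cases h
      exact ⟨i, rfl⟩
  unfold DNetwork.lapSingle
  rw [← Fintype.sum_bijective _ hedges
    (fun i => single (.inr j) 1 - single (.inl i) 1) _ fun _ => (one_smul ℤ _).symm]
  rw [show (bipNet m n).d (.inr j) = 0 from rfl, zero_smul, zero_add, Finset.sum_sub_distrib,
    Finset.sum_const, Finset.card_univ, Fintype.card_fin, lapInterior, natCast_zsmul]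
  rfl

theorem lapImage_eq_relations : (bipNet m n).lapImage = relations m n := by
  have hint : (bipNet m n).interior = Set.range (Sum.inr : Fin n → (bipNet m n).V) :=
    Set.compl_range_inl
  rw [DNetwork.lapImage_eq_span, relations, hint]
  exact congrArg (Submodule.span ℤ)
    ((Set.range_comp _ _).symm.trans (congrArg Set.range (funext (lapSingle_inr m n))))

-- From here on the graph is `K_{m+1,n+1}`, so that both parts have a vertex `0`. In the basis
-- of the header, `b₀ = (m + 1) r₀ - ∑ₖ bₖ₊₁ - g₀` and `rₛ₊₁ = r₀ + (rₛ₊₁ - r₀)`.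
def coordsOf : Fin (m + 1) ⊕ Fin (n + 1) → (Fin (m + 1) → ℤ) × (Fin n → ZMod (m + 1)) :=
  Sum.elim (Fin.cons (Fin.cons (m + 1 : ℤ) (-1), 0) fun k => (Pi.single k.succ 1, 0))
    (Fin.cons (Pi.single 0 1, 0) fun s => (Pi.single 0 1, Pi.single s 1))

noncomputable def coords :
    (Fin (m + 1) ⊕ Fin (n + 1) →₀ ℤ) →ₗ[ℤ] (Fin (m + 1) → ℤ) × (Fin n → ZMod (m + 1)) :=
  linearCombination ℤ (coordsOf m n)

noncomputable def freeGen : Fin (m + 1) → Fin (m + 1) ⊕ Fin (n + 1) →₀ ℤ :=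
  Fin.cons (single (.inr 0) 1) fun k => single (.inl k.succ) 1

noncomputable def torsionGen (s : Fin n) : Fin (m + 1) ⊕ Fin (n + 1) →₀ ℤ :=
  single (.inr s.succ) 1 - single (.inr 0) 1

theorem coords_freeGen (t : Fin (m + 1)) : coords m n (freeGen m n t) = (Pi.single t 1, 0) := by
  cases t using Fin.cases <;> simp [coords, coordsOf, freeGen]

theorem coords_torsionGen (s : Fin n) : coords m n (torsionGen m n s) = (0, Pi.single s 1) := by
  simp [coords, coordsOf, torsionGen]

theorem coords_surjective : Function.Surjective (coords m n) := by
  rintro ⟨a, b⟩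
  refine ⟨Fintype.linearCombination ℤ (freeGen m n) a + ∑ s, (b s).val • torsionGen m n s, ?_⟩
  simp only [map_add, map_sum, map_smul, map_nsmul, Fintype.linearCombination_apply,
    coords_freeGen, coords_torsionGen]
  ext t
  · simp [Prod.fst_sum, Finset.sum_apply, Pi.single_apply]
  · simp [Prod.snd_sum, Finset.sum_apply, Pi.single_apply, -ZMod.natCast_val,
      ZMod.natCast_zmod_val]

theorem sum_coordsOf_inl : ∑ i, coordsOf m n (.inl i) = (Pi.single 0 (m + 1), 0) := by
  ext t
  · cases t using Fin.cases <;> simp [coordsOf, Fin.sum_univ_succ, Prod.fst_sum, Pi.single_apply]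
  · simp [coordsOf, Fin.sum_univ_succ, Prod.snd_sum]

theorem smul_coordsOf_inr (j : Fin (n + 1)) :
    (m + 1 : ℤ) • coordsOf m n (.inr j) = (Pi.single 0 (m + 1), 0) := by
  ext t <;> cases j using Fin.cases <;> simp [coordsOf, Pi.single_apply]

theorem coords_lapInterior (j : Fin (n + 1)) : coords m n (lapInterior (m + 1) (n + 1) j) = 0 := by
  simp only [lapInterior, coords, map_sub, map_smul, map_sum, linearCombination_single, one_smul]
  push_cast
  rw [smul_coordsOf_inr, sum_coordsOf_inl, sub_self]

theorem relations_le_ker_coords : relations (m + 1) (n + 1) ≤ LinearMap.ker (coords m n) :=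
  Submodule.span_le.2 <| Set.range_subset_iff.2 <| coords_lapInterior m n

theorem smul_torsionGen_mem_relations (s : Fin n) :
    (m + 1 : ℤ) • torsionGen m n s ∈ relations (m + 1) (n + 1) := by
  have h := Submodule.sub_mem _ (lapInterior_mem_relations (m + 1) (n + 1) s.succ)
    (lapInterior_mem_relations (m + 1) (n + 1) 0)
  rw [lapInterior, lapInterior, sub_sub_sub_cancel_right, ← smul_sub] at h
  exact_mod_cast h

noncomputable def decodeTorsion (s : Fin n) :
    ZMod (m + 1) →ₗ[ℤ] (Fin (m + 1) ⊕ Fin (n + 1) →₀ ℤ) ⧸ relations (m + 1) (n + 1) :=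
  AddMonoidHom.toIntLinearMap <| ZMod.lift (m + 1)
    ⟨zmultiplesHom _ (Submodule.Quotient.mk (torsionGen m n s)), by
      simpa [← Submodule.Quotient.mk_smul] using smul_torsionGen_mem_relations m n s⟩

noncomputable def decode :
    (Fin (m + 1) → ℤ) × (Fin n → ZMod (m + 1)) →ₗ[ℤ]
      (Fin (m + 1) ⊕ Fin (n + 1) →₀ ℤ) ⧸ relations (m + 1) (n + 1) :=
  ((relations (m + 1) (n + 1)).mkQ ∘ₗ Fintype.linearCombination ℤ (freeGen m n)).coprod
    (LinearMap.lsum ℤ _ ℤ (decodeTorsion m n))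

theorem decodeTorsion_one (s : Fin n) :
    decodeTorsion m n s 1 = Submodule.Quotient.mk (torsionGen m n s) := by
  rw [decodeTorsion, AddMonoidHom.coe_toIntLinearMap, ← Int.cast_one, ZMod.lift_coe]
  simp

theorem decode_free (t : Fin (m + 1)) :
    decode m n (Pi.single t 1, 0) = Submodule.Quotient.mk (freeGen m n t) := by
  simp [decode]

theorem decode_torsion (s : Fin n) :
    decode m n (0, Pi.single s 1) = Submodule.Quotient.mk (torsionGen m n s) := by
  simp [decode, Pi.single_apply, apply_ite, decodeTorsion_one]

theorem decode_comp_coords : decode m n ∘ₗ coords m n = (relations (m + 1) (n + 1)).mkQ := by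
  have hfree (t : Fin (m + 1)) :
      decode m n (coords m n (freeGen m n t)) = Submodule.Quotient.mk (freeGen m n t) := by
    rw [coords_freeGen, decode_free]
  have htorsion (s : Fin n) :
      decode m n (coords m n (torsionGen m n s)) = Submodule.Quotient.mk (torsionGen m n s) := by
    rw [coords_torsionGen, decode_torsion]
  ext (i | j) : 1
  · cases i using Fin.cases with
    | zero =>
      ext
      simp only [LinearMap.comp_apply, lsingle_apply, coords, linearCombination_single, one_smul,
        coordsOf, Sum.elim_inl, Fin.cons_zero, decode, LinearMap.coprod_apply, map_zero, add_zero,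
        Submodule.mkQ_apply, Submodule.Quotient.eq, Fintype.linearCombination_apply,
        Fin.sum_univ_succ, Fin.cons_succ]
      convert lapInterior_mem_relations (m + 1) (n + 1) 0 using 1
      simp only [lapInterior, freeGen, Fin.sum_univ_succ, Fin.cons_zero, Fin.cons_succ,
        Pi.neg_apply, Pi.one_apply, neg_one_smul, Finset.sum_neg_distrib, Nat.cast_add, Nat.cast_one]
      abel
    | succ k => ext; exact hfree k.succ
  · cases j using Fin.cases with
    | zero => ext; exact hfree 0
    | succ s =>
      ext
      have h : single (.inr s.succ) 1 = torsionGen m n s + freeGen m n 0 := by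
        simp [torsionGen, freeGen]
      simp only [LinearMap.comp_apply, lsingle_apply, h, map_add, hfree, htorsion]
      rfl

noncomputable def upsilonEquiv :
    (bipNet (m + 1) (n + 1)).Upsilon ≃ₗ[ℤ] (Fin (m + 1) → ℤ) × (Fin n → ZMod (m + 1)) :=
  let coordsV : ((bipNet (m + 1) (n + 1)).V →₀ ℤ) →ₗ[ℤ]
      (Fin (m + 1) → ℤ) × (Fin n → ZMod (m + 1)) := coords m n
  have hker : (bipNet (m + 1) (n + 1)).lapImage = LinearMap.ker coordsV :=
    (lapImage_eq_relations _ _).trans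
      (LinearMap.ker_eq_of_comp_eq_mkQ (relations_le_ker_coords m n) (decode_comp_coords m n)).symm
  (Submodule.quotEquivOfEq _ _ hker).trans
    (coordsV.quotKerEquivOfSurjective (coords_surjective m n))

end bipNet

/-- `Υ_ℤ(K_{m,n}, L_std) ≅ ℤ^m ⊕ (ℤ/m)^{n-1}`. -/
theorem upsilon_completeBipartite (m n : ℕ) (hm : 0 < m) (hn : 0 < n) :
    Nonempty ((bipNet m n).Upsilon ≃ₗ[ℤ] ((Fin m → ℤ) × (Fin (n - 1) → ZMod m))) := by
  obtain ⟨m, rfl⟩ := Nat.exists_eq_add_one_of_ne_zero hm.ne'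
  obtain ⟨n, rfl⟩ := Nat.exists_eq_add_one_of_ne_zero hn.ne'
  exact ⟨bipNet.upsilonEquiv m n⟩
end

section
/- A finite ∂-graph G is layerable (reducible to the empty graph by iteratively deleting isolated boundary vertices, contracting boundary spikes, and deleting boundary edges) if and only if there exists a field F with at least three elements such that every F^×-network on G (arbitrary nonzero edge weights, arbitrary diagonal terms d) is non-degenerate. -/
/-- A finite graph with boundary, concretely: finite sets of vertex and (unoriented) edge
labels in `ℕ`, an endpoint assignment for edges, and a set of boundary vertices. -/
structure FG where
  V : Finset ℕ
  E : Finset ℕ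
  ends : ℕ → ℕ × ℕ
  B : Finset ℕ

namespace FG

/-- The generalized Laplacian of a weighted graph `(G, w, d)` at a vertex `x`, as a linear
functional on `F`-valued functions:
`Lu(x) = d(x)·u(x) + ∑_{edges e incident to x} w(e)·(u(x) - u(other endpoint))`. -/
noncomputable def lapAt (F : Type) [Field F] (G : FG) (w d : ℕ → F) (x : ℕ) :
    (ℕ → F) →ₗ[F] F :=
  d x • (LinearMap.proj x : (ℕ → F) →ₗ[F] F) +
    ∑ e ∈ G.E,
      ((if (G.ends e).1 = x then
          w e • ((LinearMap.proj x : (ℕ → F) →ₗ[F] F) - LinearMap.proj (G.ends e).2)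
        else 0) +
        (if (G.ends e).2 = x then
          w e • ((LinearMap.proj x : (ℕ → F) →ₗ[F] F) - LinearMap.proj (G.ends e).1)
        else 0))

/-- A single layer-stripping operation: deletion of an isolated boundary vertex, deletion of
a boundary edge, or contraction of a boundary spike. -/
inductive Strip : FG → FG → Prop
  /-- delete an isolated boundary vertex `x` -/
  | isolated (G : FG) (x : ℕ) (hx : x ∈ G.B)
      (hiso : ∀ e ∈ G.E, (G.ends e).1 ≠ x ∧ (G.ends e).2 ≠ x) :
      Strip G ⟨G.V.erase x, G.E, G.ends, G.B.erase x⟩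
  /-- delete a boundary edge `e` (both endpoints are boundary vertices) -/
  | bedge (G : FG) (e : ℕ) (he : e ∈ G.E)
      (h1 : (G.ends e).1 ∈ G.B) (h2 : (G.ends e).2 ∈ G.B) :
      Strip G ⟨G.V, G.E.erase e, G.ends, G.B⟩
  /-- contract a boundary spike `e` with boundary endpoint `x` (incident to no other edge)
  and interior endpoint `y`; afterwards `y` becomes a boundary vertex -/
  | spike (G : FG) (e x y : ℕ) (he : e ∈ G.E)
      (hends : G.ends e = (x, y) ∨ G.ends e = (y, x))
      (hx : x ∈ G.B) (hy : y ∈ G.V) (hyi : y ∉ G.B)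
      (honly : ∀ e' ∈ G.E, e' ≠ e → (G.ends e').1 ≠ x ∧ (G.ends e').2 ≠ x) :
      Strip G ⟨G.V.erase x, G.E.erase e, G.ends, insert y (G.B.erase x)⟩

/-- A `∂`-graph is layerable if it can be reduced to the empty graph by a sequence of
layer-stripping operations. -/
def Layerable (G : FG) : Prop :=
  ∃ G' : FG, Relation.ReflTransGen Strip G G' ∧ G'.V = ∅ ∧ G'.E = ∅

def eterm (F : Type) [Field F] (G : FG) (w u : ℕ → F) (x e : ℕ) : F :=
  (if (G.ends e).1 = x then w e * (u x - u (G.ends e).2) else 0) +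
  (if (G.ends e).2 = x then w e * (u x - u (G.ends e).1) else 0)

lemma lapAt_apply (F : Type) [Field F] (G : FG) (w d : ℕ → F) (x : ℕ) (u : ℕ → F) :
    lapAt F G w d x u = d x * u x + ∑ e ∈ G.E, eterm F G w u x e := by
  simp only [lapAt, eterm, LinearMap.add_apply, LinearMap.smul_apply, LinearMap.sum_apply,
    LinearMap.proj_apply, smul_eq_mul, apply_ite (fun (φ : (ℕ → F) →ₗ[F] F) => φ u),
    LinearMap.sub_apply, LinearMap.zero_apply, mul_sub]

def Nondeg (F : Type) [Field F] (G : FG) : Prop :=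
  ∀ w d : ℕ → F, (∀ e ∈ G.E, w e ≠ 0) →
    ∀ u : ℕ → F, (∀ x ∈ G.B, u x = 0) →
      (∀ x ∈ G.V, lapAt F G w d x u = 0) →
        ∀ x ∈ G.V, u x = 0

/-- strips preserve `B ⊆ V` -/
lemma strip_hBV {G G' : FG} (h : Strip G G') (hBV : G.B ⊆ G.V) : G'.B ⊆ G'.V := by
  cases h with
  | isolated x hx hiso =>
      intro z hz
      simp only [Finset.mem_erase] at hz ⊢
      exact ⟨hz.1, hBV hz.2⟩
  | bedge e he h1 h2 => exact hBV
  | spike e x y he hends hx hy hyi honly =>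
      intro z hz
      simp only [Finset.mem_insert, Finset.mem_erase] at hz ⊢
      rcases hz with rfl | ⟨hzx, hzB⟩
      · exact ⟨fun h => hyi (h ▸ hx), hy⟩
      · exact ⟨hzx, hBV hzB⟩

/-- strips preserve endpoint membership -/
lemma strip_hE {G G' : FG} (h : Strip G G')
    (hE : ∀ e ∈ G.E, (G.ends e).1 ∈ G.V ∧ (G.ends e).2 ∈ G.V) :
    ∀ e ∈ G'.E, (G'.ends e).1 ∈ G'.V ∧ (G'.ends e).2 ∈ G'.V := by
  cases h with
  | isolated x hx hiso =>
      intro e he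
      simp only [Finset.mem_erase]
      exact ⟨⟨(hiso e he).1, (hE e he).1⟩, ⟨(hiso e he).2, (hE e he).2⟩⟩
  | bedge e he h1 h2 =>
      intro e' he'
      exact hE e' (Finset.mem_of_mem_erase he')
  | spike e x y he hends hx hy hyi honly =>
      intro e' he'
      simp only [Finset.mem_erase] at he' ⊢
      exact ⟨⟨(honly e' he'.2 he'.1).1, (hE e' he'.2).1⟩,
        ⟨(honly e' he'.2 he'.1).2, (hE e' he'.2).2⟩⟩


/-- Nondegeneracy of the stripped graph implies nondegeneracy of the original. -/
lemma strip_nondeg_back {F : Type} [Field F] {G G' : FG} (h : Strip G G')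
    (hBV : G.B ⊆ G.V) (hnd : Nondeg F G') : Nondeg F G := by
  cases h with
  | isolated x hx hiso =>
      intro w d hw u hu hL z hz
      rcases eq_or_ne z x with rfl | hzx
      · exact hu z hx
      · refine hnd w d hw u (fun b hb => hu b (Finset.mem_of_mem_erase hb)) ?_ z
          (Finset.mem_erase.2 ⟨hzx, hz⟩)
        intro a ha
        have h2 : lapAt F (⟨G.V.erase x, G.E, G.ends, G.B.erase x⟩ : FG) w d a u
            = lapAt F G w d a u := rfl
        rw [h2]
        exact hL a (Finset.mem_of_mem_erase ha)
  | bedge e he h1 h2 =>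
      intro w d hw u hu hL z hz
      refine hnd w d (fun e' he' => hw e' (Finset.mem_of_mem_erase he')) u hu ?_ z hz
      intro a ha
      rw [lapAt_apply]
      show d a * u a + ∑ e' ∈ G.E.erase e, eterm F G w u a e' = 0
      have z1 : u (G.ends e).1 = 0 := hu _ h1
      have z2 : u (G.ends e).2 = 0 := hu _ h2
      have he0 : eterm F G w u a e = 0 := by
        unfold eterm
        split_ifs with p q q <;> simp_all
      have key : ∑ e' ∈ G.E.erase e, eterm F G w u a e'
          = ∑ e' ∈ G.E, eterm F G w u a e' := by
        rw [← Finset.add_sum_erase _ _ he, he0, zero_add]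
      rw [key]
      have hla := hL a ha
      rw [lapAt_apply] at hla
      exact hla
  | spike e x y he hends hx hy hyi honly =>
      intro w d hw u hu hL z hz
      have hxy : x ≠ y := fun h => hyi (h ▸ hx)
      have hux : u x = 0 := hu x hx
      have huy : u y = 0 := by
        have hLx := hL x (hBV hx)
        rw [lapAt_apply] at hLx
        have h0 : ∑ e' ∈ G.E.erase e, eterm F G w u x e' = 0 :=
          Finset.sum_eq_zero fun e' he' => by
            rw [Finset.mem_erase] at he'
            unfold eterm
            rw [if_neg (honly e' he'.2 he'.1).1, if_neg (honly e' he'.2 he'.1).2, add_zero]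
        rw [← Finset.add_sum_erase _ _ he, h0, add_zero] at hLx
        have he1 : eterm F G w u x e = w e * (0 - u y) := by
          unfold eterm
          rcases hends with h1 | h1 <;> rw [h1] <;> simp [hxy, Ne.symm hxy, hux]
        rw [he1, hux, mul_zero, zero_add, zero_sub, mul_neg, neg_eq_zero] at hLx
        exact (mul_eq_zero.1 hLx).resolve_left (hw e he)
      rcases eq_or_ne z x with rfl | hzx
      · exact hux
      refine hnd w d (fun e' he' => hw e' (Finset.mem_of_mem_erase he')) u ?_ ?_ z
        (Finset.mem_erase.2 ⟨hzx, hz⟩)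
      · intro b hb
        rcases Finset.mem_insert.1 hb with rfl | hb
        · exact huy
        · exact hu b (Finset.mem_of_mem_erase hb)
      · intro a ha
        have ha' : a ∈ G.V.erase x := ha
        rw [Finset.mem_erase] at ha'
        rw [lapAt_apply]
        show d a * u a + ∑ e' ∈ G.E.erase e, eterm F G w u a e' = 0
        have he0 : eterm F G w u a e = 0 := by
          unfold eterm
          rcases hends with h1 | h1 <;> rw [h1] <;> split_ifs with p q q <;>
            simp_all [hux, huy]
        have key : ∑ e' ∈ G.E.erase e, eterm F G w u a e'
            = ∑ e' ∈ G.E, eterm F G w u a e' := by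
          rw [← Finset.add_sum_erase _ _ he, he0, zero_add]
        rw [key]
        have hla := hL a ha'.2
        rw [lapAt_apply] at hla
        exact hla
/-- Nondegeneracy is preserved by layer-stripping. -/
lemma strip_nondeg_fwd {F : Type} [Field F] {G G' : FG} (h : Strip G G')
    (hnd : Nondeg F G) : Nondeg F G' := by
  cases h with
  | isolated x hx hiso =>
      intro w d hw u hu hL z hz
      have hz' : z ∈ G.V.erase x := hz
      rw [Finset.mem_erase] at hz'
      set u' := Function.update u x 0 with hu'def
      have key : ∀ a ∈ G.V, lapAt F G w d a u' = 0 := by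
        intro a ha
        rw [lapAt_apply]
        rcases eq_or_ne a x with rfl | hax
        · have h0 : ∑ e ∈ G.E, eterm F G w u' a e = 0 :=
            Finset.sum_eq_zero fun e he => by
              unfold eterm
              rw [if_neg (hiso e he).1, if_neg (hiso e he).2, add_zero]
          rw [h0, hu'def, Function.update_self, mul_zero, add_zero]
        · have h1 : ∑ e ∈ G.E, eterm F G w u' a e = ∑ e ∈ G.E, eterm F G w u a e :=
            Finset.sum_congr rfl fun e he => by
              unfold eterm
              rw [hu'def]
              rw [Function.update_of_ne hax, Function.update_of_ne (hiso e he).1,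
                Function.update_of_ne (hiso e he).2]
          rw [h1, hu'def, Function.update_of_ne hax]
          have hla := hL a (Finset.mem_erase.2 ⟨hax, ha⟩)
          rw [lapAt_apply] at hla
          exact hla
      have hub : ∀ b ∈ G.B, u' b = 0 := by
        intro b hb
        rcases eq_or_ne b x with rfl | hbx
        · exact Function.update_self _ _ _
        · rw [hu'def, Function.update_of_ne hbx]
          exact hu b (Finset.mem_erase.2 ⟨hbx, hb⟩)
      have hz0 := hnd w d hw u' hub key z hz'.2
      rw [hu'def, Function.update_of_ne hz'.1] at hz0
      exact hz0
  | bedge e he h1 h2 =>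
      intro w d hw u hu hL z hz
      set w' := Function.update w e 1 with hw'def
      have hw2 : ∀ e' ∈ G.E, w' e' ≠ 0 := by
        intro e' he'
        rcases eq_or_ne e' e with rfl | hne
        · rw [hw'def, Function.update_self]; exact one_ne_zero
        · rw [hw'def, Function.update_of_ne hne]
          exact hw e' (Finset.mem_erase.2 ⟨hne, he'⟩)
      have key : ∀ a ∈ G.V, lapAt F G w' d a u = 0 := by
        intro a ha
        rw [lapAt_apply, ← Finset.add_sum_erase _ _ he]
        have z1 : u (G.ends e).1 = 0 := hu _ h1
        have z2 : u (G.ends e).2 = 0 := hu _ h2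
        have he0 : eterm F G w' u a e = 0 := by
          unfold eterm
          split_ifs with p q q <;> simp_all
        rw [he0, zero_add]
        have hsame : ∑ e' ∈ G.E.erase e, eterm F G w' u a e'
            = ∑ e' ∈ G.E.erase e, eterm F G w u a e' :=
          Finset.sum_congr rfl fun e' he' => by
            unfold eterm
            rw [hw'def, Function.update_of_ne (Finset.mem_erase.1 he').1]
        rw [hsame]
        have hla := hL a ha
        rw [lapAt_apply] at hla
        exact hla
      exact hnd w' d hw2 u hu key z hz
  | spike e x y he hends hx hy hyi honly =>
      intro w d hw u hu hL z hz
      have hz' : z ∈ G.V.erase x := hz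
      rw [Finset.mem_erase] at hz'
      have hxy : x ≠ y := fun h => hyi (h ▸ hx)
      have hu' : ∀ b ∈ insert y (G.B.erase x), u b = 0 := hu
      have huy : u y = 0 := hu' y (Finset.mem_insert_self _ _)
      set w' := Function.update w e 1 with hw'def
      set u' := Function.update u x 0 with hu'def
      have hw2 : ∀ e' ∈ G.E, w' e' ≠ 0 := by
        intro e' he'
        rcases eq_or_ne e' e with rfl | hne
        · rw [hw'def, Function.update_self]; exact one_ne_zero
        · rw [hw'def, Function.update_of_ne hne]
          exact hw e' (Finset.mem_erase.2 ⟨hne, he'⟩)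
      have e1 : u' x = 0 := Function.update_self _ _ _
      have e2 : u' y = 0 := by rw [hu'def, Function.update_of_ne (Ne.symm hxy)]; exact huy
      have key : ∀ a ∈ G.V, lapAt F G w' d a u' = 0 := by
        intro a ha
        rw [lapAt_apply, ← Finset.add_sum_erase _ _ he]
        have he0 : eterm F G w' u' a e = 0 := by
          unfold eterm
          rcases hends with hh | hh <;> rw [hh] <;> split_ifs with p q q <;> simp_all
        rw [he0, zero_add]
        rcases eq_or_ne a x with rfl | hax
        · have h0 : ∑ e' ∈ G.E.erase e, eterm F G w' u' a e' = 0 :=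
            Finset.sum_eq_zero fun e' he' => by
              rw [Finset.mem_erase] at he'
              unfold eterm
              rw [if_neg (honly e' he'.2 he'.1).1, if_neg (honly e' he'.2 he'.1).2, add_zero]
          rw [h0]; rw [show u' a = 0 from e1]; ring
        · have h1 : ∑ e' ∈ G.E.erase e, eterm F G w' u' a e'
              = ∑ e' ∈ G.E.erase e, eterm F G w u a e' :=
            Finset.sum_congr rfl fun e' he' => by
              rw [Finset.mem_erase] at he'
              unfold eterm
              rw [hw'def, Function.update_of_ne he'.1, hu'def, Function.update_of_ne hax,
                Function.update_of_ne (honly e' he'.2 he'.1).1,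
                Function.update_of_ne (honly e' he'.2 he'.1).2]
          rw [h1, hu'def, Function.update_of_ne hax]
          have hla := hL a (Finset.mem_erase.2 ⟨hax, ha⟩)
          rw [lapAt_apply] at hla
          exact hla
      have hub : ∀ b ∈ G.B, u' b = 0 := by
        intro b hb
        rcases eq_or_ne b x with rfl | hbx
        · exact e1
        · rw [hu'def, Function.update_of_ne hbx]
          exact hu' b (Finset.mem_insert_of_mem (Finset.mem_erase.2 ⟨hbx, hb⟩))
      have hz0 := hnd w' d hw2 u' hub key z hz'.2
      rw [hu'def, Function.update_of_ne hz'.1] at hz0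
      exact hz0
lemma exists_ne_ne {F : Type} [Field F] {a b c : F} (hab : a ≠ b) (hac : a ≠ c)
    (hbc : b ≠ c) (s : F) : ∃ t : F, t ≠ 0 ∧ t ≠ s := by
  by_cases h1 : a ≠ 0 ∧ a ≠ s
  · exact ⟨a, h1⟩
  by_cases h2 : b ≠ 0 ∧ b ≠ s
  · exact ⟨b, h2⟩
  rw [not_and_or, not_not, not_not] at h1 h2
  rcases h1 with rfl | rfl <;> rcases h2 with rfl | rfl <;> refine ⟨c, ?_, ?_⟩ <;> simp_all [eq_comm]

lemma exists_weights {F : Type} [Field F] {a b c : F} (hab : a ≠ b) (hac : a ≠ c)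
    (hbc : b ≠ c) (S : Finset ℕ) (hS : 2 ≤ S.card) :
    ∃ f : ℕ → F, (∀ e ∈ S, f e ≠ 0) ∧ ∑ e ∈ S, f e = 0 := by
  obtain ⟨p, hp⟩ := Finset.card_pos.1 (by omega : 0 < S.card)
  obtain ⟨q, hq⟩ : (S.erase p).Nonempty :=
    Finset.card_pos.1 (by rw [Finset.card_erase_of_mem hp]; omega)
  have hqp : q ≠ p := (Finset.mem_erase.1 hq).1
  set T := (S.erase p).erase q with hT
  obtain ⟨t, ht0, hts⟩ := exists_ne_ne hab hac hbc (-(T.card : F))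
  refine ⟨fun e => if e = p then t else if e = q then -(T.card : F) - t else 1, ?_, ?_⟩
  · intro e _
    show (if e = p then t else if e = q then -(T.card : F) - t else 1) ≠ 0
    split_ifs with h1 h2
    · exact ht0
    · exact fun h => hts (sub_eq_zero.1 h).symm
    · exact one_ne_zero
  · have hqT : q ∉ T := fun h => ((Finset.mem_erase.1 h).1 rfl)
    have hpT : p ∉ insert q T := by
      simp only [Finset.mem_insert, hT, Finset.mem_erase]
      rintro (rfl | ⟨-, h, -⟩)
      · exact hqp rfl
      · exact h rfl
    have hdecomp : S = insert p (insert q T) := by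
      rw [hT, Finset.insert_erase hq, Finset.insert_erase hp]
    rw [hdecomp, Finset.sum_insert hpT, Finset.sum_insert hqT]
    have hTsum : ∀ e ∈ T, (if e = p then t else if e = q then -(T.card : F) - t else 1) = 1 := by
      intro e heT
      obtain ⟨heq, hep'⟩ := Finset.mem_erase.1 heT
      obtain ⟨hep, -⟩ := Finset.mem_erase.1 hep'
      rw [if_neg hep, if_neg heq]
    rw [Finset.sum_congr rfl hTsum, Finset.sum_const, nsmul_eq_mul, mul_one,
      if_pos rfl, if_neg hqp, if_pos rfl]
    ring

lemma layerable_of_strip {G G' : FG} (h : Strip G G') (hl : Layerable G') : Layerable G := by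
  obtain ⟨H, hrt, h1, h2⟩ := hl
  exact ⟨H, hrt.head h, h1, h2⟩
lemma nondeg_layerable {F : Type} [Field F] {a b c : F} (hab : a ≠ b) (hac : a ≠ c)
    (hbc : b ≠ c) :
    ∀ n (G : FG), G.V.card + G.E.card ≤ n → G.B ⊆ G.V →
      (∀ e ∈ G.E, (G.ends e).1 ∈ G.V ∧ (G.ends e).2 ∈ G.V) → Nondeg F G → Layerable G := by
  intro n
  induction n with
  | zero =>
      intro G hn hBV hE _
      have hV : G.V = ∅ := Finset.card_eq_zero.1 (by omega)
      have hEe : G.E = ∅ := Finset.card_eq_zero.1 (by omega)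
      exact ⟨G, Relation.ReflTransGen.refl, hV, hEe⟩
  | succ n ih =>
      intro G hn hBV hE hnd
      by_cases hV : G.V = ∅
      · refine ⟨G, Relation.ReflTransGen.refl, hV, ?_⟩
        refine Finset.eq_empty_of_forall_notMem fun e he => ?_
        have := (hE e he).1
        rw [hV] at this
        exact absurd this (Finset.notMem_empty _)
      by_cases h1 : ∃ x ∈ G.B, ∀ e ∈ G.E, (G.ends e).1 ≠ x ∧ (G.ends e).2 ≠ x
      · obtain ⟨x, hx, hiso⟩ := h1
        have hs := Strip.isolated G x hx hiso
        have hc1 : 0 < G.V.card := Finset.card_pos.2 ⟨x, hBV hx⟩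
        have hcard : (G.V.erase x).card + G.E.card ≤ n := by
          rw [Finset.card_erase_of_mem (hBV hx)]; omega
        exact layerable_of_strip hs
          (ih _ hcard (strip_hBV hs hBV) (strip_hE hs hE) (strip_nondeg_fwd hs hnd))
      by_cases h2 : ∃ e ∈ G.E, (G.ends e).1 ∈ G.B ∧ (G.ends e).2 ∈ G.B
      · obtain ⟨e, he, hb1, hb2⟩ := h2
        have hs := Strip.bedge G e he hb1 hb2
        have hc1 : 0 < G.E.card := Finset.card_pos.2 ⟨e, he⟩
        have hcard : G.V.card + (G.E.erase e).card ≤ n := by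
          rw [Finset.card_erase_of_mem he]; omega
        exact layerable_of_strip hs
          (ih _ hcard (strip_hBV hs hBV) (strip_hE hs hE) (strip_nondeg_fwd hs hnd))
      by_cases h3 : ∃ e ∈ G.E, ∃ x y : ℕ,
          (G.ends e = (x, y) ∨ G.ends e = (y, x)) ∧ x ∈ G.B ∧ y ∈ G.V ∧ y ∉ G.B ∧
            (∀ e' ∈ G.E, e' ≠ e → (G.ends e').1 ≠ x ∧ (G.ends e').2 ≠ x)
      · obtain ⟨e, he, x, y, hends, hx, hy, hyi, honly⟩ := h3
        have hs := Strip.spike G e x y he hends hx hy hyi honly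
        have hc1 : 0 < G.E.card := Finset.card_pos.2 ⟨e, he⟩
        have hc2 : 0 < G.V.card := Finset.card_pos.2 ⟨x, hBV hx⟩
        have hcard : (G.V.erase x).card + (G.E.erase e).card ≤ n := by
          rw [Finset.card_erase_of_mem (hBV hx), Finset.card_erase_of_mem he]; omega
        exact layerable_of_strip hs
          (ih _ hcard (strip_hBV hs hBV) (strip_hE hs hE) (strip_nondeg_fwd hs hnd))
      -- no strip applies: build a degenerate network, contradiction
      exfalso
      have hNB : ∀ e ∈ G.E, ¬((G.ends e).1 ∈ G.B ∧ (G.ends e).2 ∈ G.B) :=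
        fun e he hcon => h2 ⟨e, he, hcon⟩
      have hS2 : ∀ x ∈ G.B,
          2 ≤ (G.E.filter (fun e => (G.ends e).1 = x ∨ (G.ends e).2 = x)).card := by
        intro x hx
        have hne : (G.E.filter (fun e => (G.ends e).1 = x ∨ (G.ends e).2 = x)).Nonempty := by
          rw [Finset.filter_nonempty_iff]
          by_contra hcon
          push_neg at hcon
          exact h1 ⟨x, hx, fun e he => hcon e he⟩
        have hnot1 : (G.E.filter (fun e => (G.ends e).1 = x ∨ (G.ends e).2 = x)).card ≠ 1 := by
          intro hcard1
          obtain ⟨e0, he0⟩ := Finset.card_eq_one.1 hcard1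
          have he0m : e0 ∈ G.E.filter (fun e => (G.ends e).1 = x ∨ (G.ends e).2 = x) := by
            rw [he0]; exact Finset.mem_singleton_self _
          obtain ⟨he0E, he0c⟩ := Finset.mem_filter.1 he0m
          have honly : ∀ e' ∈ G.E, e' ≠ e0 → (G.ends e').1 ≠ x ∧ (G.ends e').2 ≠ x := by
            intro e' he' hne'
            constructor <;> intro hq <;>
              exact hne' (Finset.mem_singleton.1 (he0 ▸
                Finset.mem_filter.2 ⟨he', by rw [hq]; simp⟩))
          apply h3
          rcases he0c with hq | hq
          · refine ⟨e0, he0E, x, (G.ends e0).2, Or.inl ?_, hx, (hE e0 he0E).2, ?_, honly⟩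
            · exact Prod.ext hq rfl
            · intro hB2
              exact hNB e0 he0E ⟨hq ▸ hx, hB2⟩
          · refine ⟨e0, he0E, x, (G.ends e0).1, Or.inr ?_, hx, (hE e0 he0E).1, ?_, honly⟩
            · exact Prod.ext rfl hq
            · intro hB1
              exact hNB e0 he0E ⟨hB1, hq ▸ hx⟩
        have := Finset.card_pos.2 hne
        omega
      -- interior vertex exists
      obtain ⟨x0, hx0V, hx0B⟩ : ∃ x0, x0 ∈ G.V ∧ x0 ∉ G.B := by
        by_contra hcon
        push_neg at hcon
        obtain ⟨x, hxV⟩ := Finset.nonempty_iff_ne_empty.2 hV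
        exact h1 ⟨x, hcon x hxV, fun e he =>
          absurd ⟨hcon _ (hE e he).1, hcon _ (hE e he).2⟩ (hNB e he)⟩
      -- choose weights around each boundary vertex
      have hDall : ∀ x : ℕ, ∃ f : ℕ → F, x ∈ G.B →
          ((∀ e ∈ G.E.filter (fun e => (G.ends e).1 = x ∨ (G.ends e).2 = x), f e ≠ 0) ∧
            ∑ e ∈ G.E.filter (fun e => (G.ends e).1 = x ∨ (G.ends e).2 = x), f e = 0) := by
        intro x
        by_cases hx : x ∈ G.B
        · obtain ⟨f, hf⟩ := exists_weights hab hac hbc _ (hS2 x hx)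
          exact ⟨f, fun _ => hf⟩
        · exact ⟨fun _ => 1, fun h => absurd h hx⟩
      choose f hf using hDall
      set u : ℕ → F := fun z => if z ∈ G.V ∧ z ∉ G.B then 1 else 0 with hu_def
      set w : ℕ → F := fun e => if (G.ends e).1 ∈ G.B then f (G.ends e).1 e
        else if (G.ends e).2 ∈ G.B then f (G.ends e).2 e else 1 with hw_def
      set d : ℕ → F := fun x => -(∑ e ∈ G.E, eterm F G w u x e) with hd_def
      have hw : ∀ e ∈ G.E, w e ≠ 0 := by
        intro e he
        rw [hw_def]
        simp only
        by_cases b1 : (G.ends e).1 ∈ G.B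
        · rw [if_pos b1]
          exact (hf _ b1).1 e (Finset.mem_filter.2 ⟨he, Or.inl rfl⟩)
        · rw [if_neg b1]
          by_cases b2 : (G.ends e).2 ∈ G.B
          · rw [if_pos b2]
            exact (hf _ b2).1 e (Finset.mem_filter.2 ⟨he, Or.inr rfl⟩)
          · rw [if_neg b2]
            exact one_ne_zero
      have hu : ∀ x ∈ G.B, u x = 0 := by
        intro x hx
        rw [hu_def]
        exact if_neg (fun hcon => hcon.2 hx)
      have hL : ∀ x ∈ G.V, lapAt F G w d x u = 0 := by
        intro x hxV
        rw [lapAt_apply]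
        by_cases hxB : x ∈ G.B
        · rw [hu x hxB, mul_zero, zero_add]
          have hterm : ∀ e ∈ G.E, eterm F G w u x e =
              if (G.ends e).1 = x ∨ (G.ends e).2 = x then -(f x e) else 0 := by
            intro e he
            by_cases c1 : (G.ends e).1 = x
            · have c2 : (G.ends e).2 ≠ x := by
                intro hcon
                exact hNB e he ⟨c1 ▸ hxB, hcon ▸ hxB⟩
              have hB2 : (G.ends e).2 ∉ G.B := fun hcon => hNB e he ⟨c1 ▸ hxB, hcon⟩
              have hu2 : u (G.ends e).2 = 1 := by
                rw [hu_def]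
                exact if_pos ⟨(hE e he).2, hB2⟩
              have hwe : w e = f x e := by
                rw [hw_def]
                simp only
                rw [if_pos (c1 ▸ hxB), c1]
              unfold eterm
              rw [if_pos c1, if_neg c2, add_zero, hu x hxB, hu2, hwe, if_pos (Or.inl c1)]
              ring
            · by_cases c2 : (G.ends e).2 = x
              · have hB1 : (G.ends e).1 ∉ G.B := fun hcon => hNB e he ⟨hcon, c2 ▸ hxB⟩
                have hu1 : u (G.ends e).1 = 1 := by
                  rw [hu_def]
                  exact if_pos ⟨(hE e he).1, hB1⟩
                have hwe : w e = f x e := by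
                  rw [hw_def]
                  simp only
                  rw [if_neg hB1, if_pos (c2 ▸ hxB), c2]
                unfold eterm
                rw [if_neg c1, if_pos c2, zero_add, hu x hxB, hu1, hwe, if_pos (Or.inr c2)]
                ring
              · unfold eterm
                rw [if_neg c1, if_neg c2, add_zero, if_neg (by tauto)]
          rw [Finset.sum_congr rfl hterm, ← Finset.sum_filter, Finset.sum_neg_distrib,
            (hf x hxB).2, neg_zero]
        · have hux : u x = 1 := by
            rw [hu_def]
            exact if_pos ⟨hxV, hxB⟩
          rw [hux, hd_def, mul_one]
          ring
      have hzero := hnd w d hw u hu hL x0 hx0V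
      have hone : u x0 = 1 := if_pos ⟨hx0V, hx0B⟩
      rw [hone] at hzero
      exact one_ne_zero hzero
end FG

/-- a finite `∂`-graph is layerable iff there is a field `F` with at least three
elements such that every `F^×`-network on `G` (arbitrary nonzero edge weights, arbitrary
diagonal terms) is non-degenerate. -/
theorem layerable_iff_field_nondegenerate (G : FG)
    (hBV : G.B ⊆ G.V)
    (hE : ∀ e ∈ G.E, (G.ends e).1 ∈ G.V ∧ (G.ends e).2 ∈ G.V) :
    FG.Layerable G ↔
      ∃ (F : Type) (_ : Field F),
        (∃ a b c : F, a ≠ b ∧ a ≠ c ∧ b ≠ c) ∧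
          ∀ w d : ℕ → F, (∀ e ∈ G.E, w e ≠ 0) →
            ∀ u : ℕ → F, (∀ x ∈ G.B, u x = 0) →
              (∀ x ∈ G.V, FG.lapAt F G w d x u = 0) →
                ∀ x ∈ G.V, u x = 0 := by
  constructor
  · rintro ⟨G', hrt, hV', -⟩
    refine ⟨ℚ, inferInstance, ⟨0, 1, 2, by norm_num, by norm_num, by norm_num⟩, ?_⟩
    have key : ∀ H : FG, Relation.ReflTransGen FG.Strip H G' → H.B ⊆ H.V → FG.Nondeg ℚ H := by
      intro H hH
      induction hH using Relation.ReflTransGen.head_induction_on with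
      | refl =>
          intro _ w d hw u hu hL x hx
          rw [hV'] at hx
          exact absurd hx (Finset.notMem_empty _)
      | head hstep hrest ih =>
          intro hBV'
          exact FG.strip_nondeg_back hstep hBV' (ih (FG.strip_hBV hstep hBV'))
    exact key G hrt hBV
  · rintro ⟨F, instF, ⟨a, b, c, hab, hac, hbc⟩, hnd⟩
    exact @FG.nondeg_layerable F instF a b c hab hac hbc (G.V.card + G.E.card) G le_rfl hBV hE hnd
end
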